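/- Let (X,φ) be a topological dynamical system, m ≥ 3, and suppose the Besicovitch m-distance D̄_m^φ: X^m → ℝ is continuous. Suppose further that (Y,ψ) is an equicontinuous factor of (X,φ) via a continuous factor map π: X → Y, with a ψ-invariant metric d_Y on Y satisfying d(x,x') ≥ d_Y(π(x),π(x')), and that there exist points x_2,…,x_m ∈ X with π(x_i) ≠ π(x_j) for all 2 ≤ i < j ≤ m. Then every point of X is a mean equicontinuity point, i.e., (X,φ) is mean equicontinuous. -/
import Mathlib


open Filter Metric Set

/-- Minimum pairwise distance of an `m`-tuple. -/
noncomputable def Dmin {X : Type*} [MetricSpace X] {m : ℕ} (x : Fin m → X) : ℝ :=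
  sInf {r : ℝ | ∃ i j : Fin m, i < j ∧ r = dist (x i) (x j)}

/-- Maximum pairwise distance of an `m`-tuple. -/
noncomputable def Dmax {X : Type*} [MetricSpace X] {m : ℕ} (x : Fin m → X) : ℝ :=
  sSup {r : ℝ | ∃ i j : Fin m, i < j ∧ r = dist (x i) (x j)}

/-- The Besicovitch `m`-distance of an `m`-tuple under the dynamics `φ`. -/
noncomputable def DBar {X : Type*} [MetricSpace X] {m : ℕ} (φ : X → X) (x : Fin m → X) : ℝ :=
  Filter.limsup (fun n : ℕ => (∑ i ∈ Finset.range n, Dmin (fun j => φ^[i] (x j))) / n)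
    Filter.atTop

/-- The Besicovitch pseudometric. -/
noncomputable def dB {X : Type*} [MetricSpace X] (φ : X → X) (x y : X) : ℝ :=
  Filter.limsup (fun n : ℕ => (∑ i ∈ Finset.range n, dist (φ^[i] x) (φ^[i] y)) / n)
    Filter.atTop

lemma Dmin_nonneg {X : Type*} [MetricSpace X] {m : ℕ} (w : Fin m → X) : 0 ≤ Dmin w :=
  Real.sInf_nonneg (by rintro r ⟨i, j, _, rfl⟩; exact dist_nonneg)

lemma Dmin_bddBelow {X : Type*} [MetricSpace X] {m : ℕ} (w : Fin m → X) :
    BddBelow {r : ℝ | ∃ i j : Fin m, i < j ∧ r = dist (w i) (w j)} :=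
  ⟨0, by rintro r ⟨i, j, _, rfl⟩; exact dist_nonneg⟩

lemma Dmin_le {X : Type*} [MetricSpace X] {m : ℕ} (hm : 1 < m) (w : Fin m → X) :
    Dmin w ≤ dist (w ⟨0, by omega⟩) (w ⟨1, by omega⟩) :=
  csInf_le (Dmin_bddBelow w) ⟨⟨0, by omega⟩, ⟨1, by omega⟩, by simp [Fin.mk_lt_mk], rfl⟩

lemma le_Dmin {X : Type*} [MetricSpace X] {m : ℕ} (hm : 1 < m) (w : Fin m → X) {b : ℝ}
    (h : ∀ i j : Fin m, i < j → b ≤ dist (w i) (w j)) : b ≤ Dmin w := by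
  refine le_csInf ⟨dist (w ⟨0, by omega⟩) (w ⟨1, by omega⟩),
    ⟨⟨0, by omega⟩, ⟨1, by omega⟩, by simp [Fin.mk_lt_mk], rfl⟩⟩ ?_
  rintro r ⟨i, j, hij, rfl⟩
  exact h i j hij

theorem stmt9 {X Y : Type*} [MetricSpace X] [CompactSpace X] [MetricSpace Y] [CompactSpace Y]
    {m : ℕ} (hm : 3 ≤ m)
    (φ : X → X) (hφ : IsHomeomorph φ) (ψ : Y → Y) (hψ : IsHomeomorph ψ)
    (π : X → Y) (hπ : Continuous π) (hfac : π ∘ φ = ψ ∘ π)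
    -- the metric on `Y` is `ψ`-invariant, so `(Y,ψ)` is an equicontinuous factor
    (hinv : ∀ y y' : Y, dist (ψ y) (ψ y') = dist y y')
    -- the metric on `X` dominates the pulled-back metric on `Y`
    (hdom : ∀ x x' : X, dist (π x) (π x') ≤ dist x x')
    -- there exist `m - 1` points with pairwise distinct images in `Y`
    (hpts : ∃ p : Fin (m - 1) → X, ∀ i j : Fin (m - 1), i ≠ j → π (p i) ≠ π (p j))
    -- the Besicovitch `m`-distance is continuous
    (hcont : Continuous fun x : Fin m → X => DBar φ x) :
    -- then every point of `X` is a mean equicontinuity point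
    ∀ x : X, ∀ ε > (0 : ℝ), ∃ δ > (0 : ℝ), ∀ x' : X, dist x x' < δ → dB φ x x' < ε := by
  classical
  obtain ⟨p, hp⟩ := hpts
  intro x ε hε
  have hm1 : 1 < m := by omega
  -- a uniform bound on distances in X
  obtain ⟨D0, hD0⟩ := Metric.isBounded_iff.mp (isCompact_univ (X := X)).isBounded
  set D : ℝ := max D0 1 with hDdef
  have hD : ∀ a b : X, dist a b ≤ D := fun a b =>
    le_trans (hD0 (mem_univ a) (mem_univ b)) (le_max_left _ _)
  have hD1 : (1 : ℝ) ≤ D := le_max_right _ _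
  -- the key factor inequality for iterates
  have hsemi : Function.Semiconj π φ ψ := fun a => congrFun hfac a
  have hinvIt : ∀ (i : ℕ) (y y' : Y), dist (ψ^[i] y) (ψ^[i] y') = dist y y' := by
    intro i
    induction i with
    | zero => simp
    | succ n ih =>
      intro y y'
      rw [Function.iterate_succ_apply', Function.iterate_succ_apply', hinv]
      exact ih y y'
  have key : ∀ (i : ℕ) (a b : X), dist (π a) (π b) ≤ dist (φ^[i] a) (φ^[i] b) := by
    intro i a b
    calc dist (π a) (π b) = dist (ψ^[i] (π a)) (ψ^[i] (π b)) := (hinvIt i _ _).symm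
      _ = dist (π (φ^[i] a)) (π (φ^[i] b)) := by
          rw [(hsemi.iterate_right i) a, (hsemi.iterate_right i) b]
      _ ≤ dist (φ^[i] a) (φ^[i] b) := hdom _ _
  -- select m-2 of the p-points avoiding π x
  set S0 : Finset (Fin (m - 1)) := Finset.univ.filter (fun i => ¬ (π (p i) = π x)) with hS0def
  have hbad : (Finset.univ.filter (fun i : Fin (m - 1) => π (p i) = π x)).card ≤ 1 := by
    apply Finset.card_le_one.mpr
    intro a ha b hb
    by_contra hab
    exact hp a b hab (by
      rw [(Finset.mem_filter.mp ha).2, (Finset.mem_filter.mp hb).2])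
  have hcardeq := Finset.card_filter_add_card_filter_not
    (s := (Finset.univ : Finset (Fin (m - 1)))) (fun i => π (p i) = π x)
  have hcard : m - 2 ≤ S0.card := by
    rw [hS0def]
    have := Finset.card_fin (m - 1)
    omega
  obtain ⟨t, htsub, htcard⟩ := Finset.exists_subset_card_eq hcard
  set g : Fin (m - 2) → Fin (m - 1) := fun j => t.orderEmbOfFin htcard j with hgdef
  have hg_mem : ∀ j, g j ∈ S0 := fun j => htsub (t.orderEmbOfFin_mem htcard j)
  have hg_ne : ∀ j, π (p (g j)) ≠ π x := fun j => (Finset.mem_filter.mp (hg_mem j)).2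
  have hg_inj : Function.Injective g := (t.orderEmbOfFin htcard).injective
  -- the test tuple
  set T : X → Fin m → X := fun x' k =>
    if h : (k : ℕ) < 2 then (if (k : ℕ) = 0 then x else x')
    else p (g ⟨(k : ℕ) - 2, by omega⟩) with hTdef
  have hTlt : ∀ (x' : X) (k : Fin m), (k : ℕ) < 2 →
      T x' k = if (k : ℕ) = 0 then x else x' := by
    intro x' k h; rw [hTdef]; exact dif_pos h
  have hTge : ∀ (x' : X) (k : Fin m) (h : ¬ (k : ℕ) < 2),
      T x' k = p (g ⟨(k : ℕ) - 2, by omega⟩) := by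
    intro x' k h; rw [hTdef]; exact dif_neg h
  have hT0 : ∀ x', T x' ⟨0, by omega⟩ = x := by
    intro x'; rw [hTlt x' _ (by norm_num)]; norm_num
  have hT1 : ∀ x', T x' ⟨1, by omega⟩ = x' := by
    intro x'; rw [hTlt x' _ (by norm_num)]; norm_num
  -- the images under π of the base tuple
  set F : Fin m → Y := fun k => π (T x k) with hFdef
  have hFlt : ∀ (k : Fin m), (k : ℕ) < 2 → F k = π x := by
    intro k h
    simp only [hFdef]
    rw [hTlt x k h]
    split_ifs <;> rfl
  have hFge : ∀ (k : Fin m) (h : ¬ (k : ℕ) < 2), F k = π (p (g ⟨(k : ℕ) - 2, by omega⟩)) := by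
    intro k h
    simp only [hFdef]
    rw [hTge x k h]
  -- the set of "other" pairs
  set S : Finset (Fin m × Fin m) :=
    Finset.univ.filter (fun pr => pr.1 < pr.2 ∧ ¬ ((pr.1 : ℕ) = 0 ∧ (pr.2 : ℕ) = 1)) with hSdef
  have hpr0 : ((⟨0, by omega⟩ : Fin m), (⟨2, by omega⟩ : Fin m)) ∈ S := by
    rw [hSdef, Finset.mem_filter]
    exact ⟨Finset.mem_univ _, by simp [Fin.lt_def], by simp⟩
  have hSne : S.Nonempty := ⟨_, hpr0⟩
  have hFne : ∀ pr ∈ S, F pr.1 ≠ F pr.2 := by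
    rintro ⟨k, l⟩ hpr
    obtain ⟨-, hkl, h01⟩ := Finset.mem_filter.mp hpr
    dsimp only at hkl h01
    have hkl' : (k : ℕ) < (l : ℕ) := hkl
    have hl : ¬ (l : ℕ) < 2 := by omega
    by_cases hk : (k : ℕ) < 2
    · rw [hFlt k hk, hFge l hl]
      exact fun h => hg_ne _ h.symm
    · rw [hFge k hk, hFge l hl]
      refine hp _ _ (fun hg' => ?_)
      have h2 := hg_inj hg'
      have h3 : (k : ℕ) - 2 = (l : ℕ) - 2 := congrArg Fin.val h2
      omega
  set c : ℝ := S.inf' hSne (fun pr => dist (F pr.1) (F pr.2)) with hcdef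
  have hc_le : ∀ pr ∈ S, c ≤ dist (F pr.1) (F pr.2) := fun pr hpr =>
    Finset.inf'_le _ hpr
  have hcpos : 0 < c := by
    rw [hcdef, Finset.lt_inf'_iff]
    intro pr hpr
    exact dist_pos.mpr (hFne pr hpr)
  have hcD : c ≤ D := by
    refine le_trans (hc_le _ hpr0) ?_
    simp only [hFdef]
    exact le_trans (hdom _ _) (hD _ _)
  -- closeness of π (T x' k) to F k
  have hclose : ∀ (x' : X) (k : Fin m), dist (π (T x' k)) (F k) ≤ dist x x' := by
    intro x' k
    by_cases h : (k : ℕ) < 2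
    · by_cases h0 : (k : ℕ) = 0
      · rw [hFlt k h, hTlt x' k h, if_pos h0]
        simp only [dist_self]
        exact dist_nonneg
      · rw [hFlt k h, hTlt x' k h, if_neg h0]
        calc dist (π x') (π x) ≤ dist x' x := hdom _ _
          _ = dist x x' := dist_comm _ _
    · simp only [hFdef]
      rw [hTge x' k h, hTge x k h]
      simp only [dist_self]
      exact dist_nonneg
  -- claim A : all other pairs remain c/2-separated along the orbit
  have claimA : ∀ (x' : X), dist x x' < c / 4 → ∀ (i : ℕ), ∀ pr ∈ S,
      c / 2 ≤ dist (φ^[i] (T x' pr.1)) (φ^[i] (T x' pr.2)) := by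
    intro x' hx' i pr hpr
    have h1 := hclose x' pr.1
    have h2 := hclose x' pr.2
    have h3 := hc_le pr hpr
    have htri : dist (F pr.1) (F pr.2) ≤
        dist (F pr.1) (π (T x' pr.1)) + dist (π (T x' pr.1)) (π (T x' pr.2))
          + dist (π (T x' pr.2)) (F pr.2) := dist_triangle4 _ _ _ _
    have h4 := key i (T x' pr.1) (T x' pr.2)
    have h5 := dist_comm (F pr.1) (π (T x' pr.1))
    linarith
  set K : ℝ := 2 * D / c with hKdef
  have hKpos : 0 < K := by positivity
  have hK1 : 1 ≤ K := by
    rw [hKdef, le_div_iff₀ hcpos]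
    linarith
  -- claim B : pointwise comparison
  have claimB : ∀ (x' : X), dist x x' < c / 4 → ∀ (i : ℕ),
      dist (φ^[i] x) (φ^[i] x') ≤ K * Dmin (fun j => φ^[i] (T x' j)) := by
    intro x' hx' i
    set M : ℝ := Dmin (fun j => φ^[i] (T x' j)) with hMdef
    have hM0 : 0 ≤ M := Dmin_nonneg _
    set d : ℝ := dist (φ^[i] x) (φ^[i] x') with hddef
    have hMlow : min d (c / 2) ≤ M := by
      apply le_Dmin hm1
      intro k l hkl
      show min d (c / 2) ≤ dist (φ^[i] (T x' k)) (φ^[i] (T x' l))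
      by_cases h01 : (k : ℕ) = 0 ∧ (l : ℕ) = 1
      · have hk : k = ⟨0, by omega⟩ := Fin.ext h01.1
        have hl : l = ⟨1, by omega⟩ := Fin.ext h01.2
        rw [hk, hl]
        simp only [hT0, hT1]
        exact min_le_left _ _
      · have hmem : (k, l) ∈ S := by
          rw [hSdef, Finset.mem_filter]
          exact ⟨Finset.mem_univ _, hkl, h01⟩
        exact le_trans (min_le_right _ _) (claimA x' hx' i (k, l) hmem)
    by_cases hd : d ≤ c / 2
    · rw [min_eq_left hd] at hMlow
      calc d ≤ M := hMlow
        _ = 1 * M := (one_mul M).symm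
        _ ≤ K * M := mul_le_mul_of_nonneg_right hK1 hM0
    · rw [min_eq_right (le_of_lt (lt_of_not_ge hd))] at hMlow
      calc d ≤ D := hD _ _
        _ = K * (c / 2) := by rw [hKdef]; field_simp
        _ ≤ K * M := mul_le_mul_of_nonneg_left hMlow (le_of_lt hKpos)
  -- continuity of the tuple map
  have hTcont : Continuous T := by
    apply continuous_pi
    intro k
    by_cases h : (k : ℕ) < 2
    · by_cases h0 : (k : ℕ) = 0
      · have : (fun x' => T x' k) = fun _ => x := by
          funext x'; rw [hTlt x' k h, if_pos h0]
        rw [this]; exact continuous_const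
      · have : (fun x' => T x' k) = fun x' => x' := by
          funext x'; rw [hTlt x' k h, if_neg h0]
        rw [this]; exact continuous_id
    · have : (fun x' => T x' k) = fun _ => p (g ⟨(k : ℕ) - 2, by omega⟩) := by
        funext x'; exact hTge x' k h
      rw [this]; exact continuous_const
  have hcAt : ContinuousAt (fun x' => DBar φ (T x')) x :=
    (hcont.comp hTcont).continuousAt
  -- DBar at the diagonal tuple vanishes
  have hDmin0 : ∀ (i : ℕ), Dmin (fun j => φ^[i] (T x j)) = 0 := by
    intro i
    apply le_antisymm _ (Dmin_nonneg _)
    have h1 := Dmin_le hm1 (fun j => φ^[i] (T x j))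
    simpa only [hT0, hT1, dist_self] using h1
  have hDBx : DBar φ (T x) = 0 := by
    have h0 : (fun n : ℕ => (∑ i ∈ Finset.range n, Dmin (fun j => φ^[i] (T x j))) / n)
        = fun _ => (0 : ℝ) := by
      funext n
      rw [Finset.sum_congr rfl (fun i _ => hDmin0 i)]
      simp
    rw [DBar, h0, limsup_const]
  -- choose δ via continuity
  have hεK : 0 < (ε / 2) / K := by positivity
  obtain ⟨δ₁, hδ₁pos, hδ₁⟩ := Metric.continuousAt_iff.mp hcAt ((ε / 2) / K) hεK
  refine ⟨min δ₁ (c / 4), by positivity, ?_⟩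
  intro x' hx'
  have hx1 : dist x x' < c / 4 := lt_of_lt_of_le hx' (min_le_right _ _)
  have hDB' : DBar φ (T x') < (ε / 2) / K := by
    have h := hδ₁ (x := x') (by rw [dist_comm]; exact lt_of_lt_of_le hx' (min_le_left _ _))
    rw [hDBx, Real.dist_eq, sub_zero] at h
    exact lt_of_le_of_lt (le_abs_self _) h
  -- boundedness of the averaged Dmin sequence
  have hbBdd : IsBoundedUnder (· ≤ ·) atTop
      (fun n : ℕ => (∑ i ∈ Finset.range n, Dmin (fun j => φ^[i] (T x' j))) / n) := by
    apply isBoundedUnder_of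
    refine ⟨D, fun n => ?_⟩
    rcases Nat.eq_zero_or_pos n with hn | hn
    · rw [hn]; simpa using by linarith
    · rw [div_le_iff₀ (by positivity)]
      calc ∑ i ∈ Finset.range n, Dmin (fun j => φ^[i] (T x' j))
          ≤ ∑ _i ∈ Finset.range n, D := by
            apply Finset.sum_le_sum
            intro i _
            exact le_trans (Dmin_le hm1 _) (hD _ _)
        _ = D * n := by rw [Finset.sum_const, Finset.card_range]; ring
  rw [DBar] at hDB'
  have hev := eventually_lt_of_limsup_lt hDB' hbBdd
  have hev2 : ∀ᶠ n in atTop,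
      (∑ i ∈ Finset.range n, dist (φ^[i] x) (φ^[i] x')) / n ≤ ε / 2 := by
    filter_upwards [hev] with n hn
    have hsum : (∑ i ∈ Finset.range n, dist (φ^[i] x) (φ^[i] x'))
        ≤ K * ∑ i ∈ Finset.range n, Dmin (fun j => φ^[i] (T x' j)) := by
      rw [Finset.mul_sum]
      exact Finset.sum_le_sum fun i _ => claimB x' hx1 i
    rcases Nat.eq_zero_or_pos n with hn0 | hn0
    · rw [hn0]; simpa using by linarith
    · have hnpos : (0 : ℝ) < n := by
        have : (0 : ℕ) < n := hn0
        exact_mod_cast this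
      have h2 : (∑ i ∈ Finset.range n, dist (φ^[i] x) (φ^[i] x')) / n
          ≤ K * ((∑ i ∈ Finset.range n, Dmin (fun j => φ^[i] (T x' j))) / n) := by
        rw [← mul_div_assoc]
        gcongr
      have h3 : K * ((∑ i ∈ Finset.range n, Dmin (fun j => φ^[i] (T x' j))) / n)
          ≤ K * ((ε / 2) / K) := mul_le_mul_of_nonneg_left (le_of_lt hn) (le_of_lt hKpos)
      have h4 : K * ((ε / 2) / K) = ε / 2 := by
        rw [← mul_div_assoc, mul_div_cancel_left₀ _ (ne_of_gt hKpos)]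
      linarith
  rw [dB]
  have hco : IsCoboundedUnder (· ≤ ·) atTop
      (fun n : ℕ => (∑ i ∈ Finset.range n, dist (φ^[i] x) (φ^[i] x')) / n) := by
    exact isCoboundedUnder_le_of_le atTop (x := 0) fun n => by positivity
  exact lt_of_le_of_lt (limsup_le_of_le hco hev2) (by linarith)
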